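/- For every nonempty open subinterval I ⊆ [1/3, 2] there exists a bound N such that for every x ∈ [1/3, 2] there is some n ≤ N with f^n(x) ∈ I, where f is the Kari map. -/

import Mathlib

noncomputable def kariMap (x : ℝ) : ℝ := if x ≤ 1 then 2 * x else x / 3

/-!
Under `x ↦ log x` taken modulo `log 6`, the interval `[1/3, 2]` becomes the circle
`ℝ / (log 6) ℤ` (its endpoints `-log 3` and `log 2` are glued) and both branches of `kariMap`
become the rotation by `log 2`: doubling adds `log 2`, dividing by `3` adds `log 2 - log 6`.
Since `log 2 / log 6` is irrational, the forward orbit of the rotation is dense, and by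
compactness of the circle finitely many iterates of any open arc already cover the circle.
-/

open Real Set Function

instance fact_log_six_pos : Fact (0 < log 6) := ⟨log_pos (by norm_num)⟩

theorem exists_bound_add_nsmul_mem_of_denseRange {G : Type*} [AddGroup G] [TopologicalSpace G]
    [ContinuousAdd G] [CompactSpace G] {α : G}
    (hα : DenseRange (fun n : ℕ => n • α)) {U : Set G} (hU : IsOpen U) (hne : U.Nonempty) :
    ∃ N : ℕ, ∀ z : G, ∃ n ≤ N, z + n • α ∈ U := by
  have hcover : (univ : Set G) ⊆ ⋃ n : ℕ, (· + n • α) ⁻¹' U := by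
    intro z _
    obtain ⟨u, hu⟩ := hne
    obtain ⟨n, hn⟩ := hα.exists_mem_open (hU.preimage (continuous_const_add z))
      ⟨-z + u, by simpa [← add_assoc] using hu⟩
    exact mem_iUnion.mpr ⟨n, hn⟩
  obtain ⟨t, ht⟩ := isCompact_univ.elim_finite_subcover _
    (fun n => hU.preimage (continuous_add_const (n • α))) hcover
  refine ⟨t.sup id, fun z => ?_⟩
  obtain ⟨n, hnt, hn⟩ := mem_iUnion₂.mp (ht (mem_univ z))
  exact ⟨n, Finset.le_sup (f := id) hnt, hn⟩

theorem AddCircle.eq_of_coe_eq_of_mem_Ioo_of_mem_Icc {𝕜 : Type*} [AddCommGroup 𝕜]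
    [LinearOrder 𝕜] [IsOrderedAddMonoid 𝕜] [Archimedean 𝕜] {p : 𝕜} [Fact (0 < p)] {s x y : 𝕜}
    (hx : x ∈ Ioo s (s + p)) (hy : y ∈ Icc s (s + p)) (h : (x : AddCircle p) = y) : x = y := by
  rcases hy.2.lt_or_eq with hlt | heq
  · exact (AddCircle.coe_eq_coe_iff_of_mem_Ico ⟨hx.1.le, hx.2⟩ ⟨hy.1, hlt⟩).mp h
  · have hsy : s < y := heq ▸ lt_add_of_pos_right s Fact.out
    exact (AddCircle.coe_eq_coe_iff_of_mem_Ioc ⟨hx.1, hx.2.le⟩ ⟨hsy, hy.2⟩).mp h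

theorem irrational_log_two_div_log_six : Irrational (log 2 / log 6) := by
  rintro ⟨q, hq⟩
  have h6 : 0 < log 6 := Fact.out
  have hlog : (q.num : ℝ) * log 6 = q.den * log 2 := by
    rw [eq_div_iff h6.ne', Rat.cast_def] at hq
    field_simp at hq
    linarith
  have hnum : 0 < q.num := by
    have : (0 : ℝ) < q.num * log 6 := by
      rw [hlog]; exact mul_pos (by exact_mod_cast q.den_pos) (log_pos one_lt_two)
    exact_mod_cast pos_of_mul_pos_left this h6.le
  lift q.num to ℕ using hnum.le with n
  have hpow : (6 : ℕ) ^ n = 2 ^ q.den := by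
    have : (6 : ℝ) ^ n = 2 ^ q.den :=
      log_injOn_pos (by positivity : (0 : ℝ) < 6 ^ n) (by positivity : (0 : ℝ) < 2 ^ q.den)
        (by simpa [log_pow] using hlog)
    exact_mod_cast this
  have h3 : 3 ∣ 2 ^ q.den := hpow ▸ dvd_pow (by norm_num : 3 ∣ 6) (by omega)
  exact absurd (Nat.prime_three.dvd_of_dvd_pow h3) (by norm_num)

theorem denseRange_nsmul_coe_log_two :
    DenseRange (fun n : ℕ => n • ((log 2 : ℝ) : AddCircle (log 6))) :=
  denseRange_zsmul_iff_nsmul.mp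
    (AddCircle.denseRange_zsmul_coe_iff.mpr irrational_log_two_div_log_six)

theorem mapsTo_kariMap_Icc : MapsTo kariMap (Icc (1 / 3) 2) (Icc (1 / 3) 2) := by
  rintro x ⟨hx₁, hx₂⟩
  unfold kariMap
  split_ifs <;> constructor <;> linarith

theorem kariMap_pos {x : ℝ} (hx : 0 < x) : 0 < kariMap x := by
  unfold kariMap
  split_ifs <;> positivity

theorem log_six_eq_log_two_add_log_three : log 6 = log 2 + log 3 := by
  rw [← log_mul two_ne_zero three_ne_zero]; norm_num

theorem coe_log_kariMap {x : ℝ} (hx : 0 < x) :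
    ((log (kariMap x) : ℝ) : AddCircle (log 6)) = (log x : AddCircle (log 6)) + (log 2 : ℝ) := by
  unfold kariMap
  split_ifs
  · rw [log_mul two_ne_zero hx.ne', AddCircle.coe_add, add_comm]
  · rw [← AddCircle.coe_add, ← AddCircle.coe_add_period (log 6) (log (x / 3)),
      log_div hx.ne' three_ne_zero, log_six_eq_log_two_add_log_three]
    ring_nf

theorem coe_log_iterate_kariMap {x : ℝ} (hx : 0 < x) (n : ℕ) :
    ((log (kariMap^[n] x) : ℝ) : AddCircle (log 6)) =
      (log x : AddCircle (log 6)) + n • ((log 2 : ℝ) : AddCircle (log 6)) := by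
  induction n with
  | zero => simp
  | succ n ih =>
    have hpos : 0 < kariMap^[n] x :=
      (MapsTo.iterate (fun _ => kariMap_pos : MapsTo kariMap (Ioi 0) (Ioi 0)) n) hx
    rw [iterate_succ_apply', coe_log_kariMap hpos, ih, succ_nsmul, add_assoc]

theorem mem_Ioo_of_coe_log_mem_image {a b y : ℝ} (ha : 1 / 3 ≤ a) (hab : a < b) (hb : b ≤ 2)
    (hy : y ∈ Icc (1 / 3) 2)
    (h : ((log y : ℝ) : AddCircle (log 6)) ∈ ((↑) : ℝ → AddCircle (log 6)) '' Ioo (log a) (log b)) :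
    y ∈ Ioo a b := by
  obtain ⟨c, hc, hcy⟩ := h
  have ha₀ : 0 < a := by linarith
  have hy₀ : 0 < y := by linarith [hy.1]
  have hlog₃ : log (1 / 3) = -log 3 := by rw [one_div, log_inv]
  have hend : -log 3 + log 6 = log 2 := by rw [log_six_eq_log_two_add_log_three]; ring
  have hc' : c ∈ Ioo (-log 3) (-log 3 + log 6) := by
    rw [hend, ← hlog₃]
    exact ⟨(log_le_log (by norm_num) ha).trans_lt hc.1,
      hc.2.trans_le (log_le_log (ha₀.trans hab) hb)⟩
  have hy' : log y ∈ Icc (-log 3) (-log 3 + log 6) := by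
    rw [hend, ← hlog₃]
    exact ⟨log_le_log (by norm_num) hy.1, log_le_log hy₀ hy.2⟩
  rw [AddCircle.eq_of_coe_eq_of_mem_Ioo_of_mem_Icc hc' hy' hcy] at hc
  exact ⟨(log_lt_log_iff ha₀ hy₀).mp hc.1, (log_lt_log_iff hy₀ (ha₀.trans hab)).mp hc.2⟩

theorem kariMap_uniform_hitting (a b : ℝ) (ha : 1/3 ≤ a) (hab : a < b) (hb : b ≤ 2) :
    ∃ N : ℕ, ∀ x ∈ Set.Icc (1/3 : ℝ) 2, ∃ n ≤ N, kariMap^[n] x ∈ Set.Ioo a b := by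
  have hopen : IsOpen (((↑) : ℝ → AddCircle (log 6)) '' Ioo (log a) (log b)) :=
    QuotientAddGroup.isOpenQuotientMap_mk.isOpenMap _ isOpen_Ioo
  have hne : (((↑) : ℝ → AddCircle (log 6)) '' Ioo (log a) (log b)).Nonempty :=
    (nonempty_Ioo.mpr (log_lt_log (by linarith) hab)).image _
  obtain ⟨N, hN⟩ := exists_bound_add_nsmul_mem_of_denseRange denseRange_nsmul_coe_log_two hopen hne
  refine ⟨N, fun x hx => ?_⟩
  obtain ⟨n, hnN, hn⟩ := hN (log x)
  rw [← coe_log_iterate_kariMap (by linarith [hx.1]) n] at hn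
  exact ⟨n, hnN, mem_Ioo_of_coe_log_mem_image ha hab hb (mapsTo_kariMap_Icc.iterate n hx) hn⟩
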